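/- arXiv:1804.09815 — 3 statements merged into one kernel-verified Lean document; each statement's English description precedes it below -/
import Mathlib

section
/- For every μ ∈ ℝ there exists a constant C(μ) > 0, depending only on μ, such that for all (t,x,y) ∈ (0,1] × ℝ_{≥0} × ℝ_{≥0} one has ρ_μ(t,x,y) ≤ C(μ)·ϱ(t,x,y). -/
open MeasureTheory Real

/-- Complementary error function: `erfc x = (2/√π) ∫_x^∞ e^{-s²} ds`. -/
noncomputable def erfc (x : ℝ) : ℝ :=
  (2 / Real.sqrt π) * ∫ s in Set.Ioi x, Real.exp (-s ^ 2)

/-- Standard heat kernel `ϱ(t,x,y) = (1/√(2πt)) exp(-(y-x)²/(2t))`. -/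
noncomputable def heatKernel (t x y : ℝ) : ℝ :=
  (1 / Real.sqrt (2 * π * t)) * Real.exp (-(y - x) ^ 2 / (2 * t))

/-- Robin heat kernel `ρ_μ(t,x,y)`. -/
noncomputable def robinKernel (μ t x y : ℝ) : ℝ :=
  (1 / Real.sqrt (2 * π * t)) *
      (Real.exp (-(y - x) ^ 2 / (2 * t)) + Real.exp (-(y + x) ^ 2 / (2 * t))) -
    μ * Real.exp (μ * (y + x) + μ ^ 2 * t / 2) *
      erfc ((y + x) / Real.sqrt (2 * t) + μ * Real.sqrt (t / 2))

/-!
Write `z = x + y` and `w = z / √(2t) + μ √(t/2)` for the argument of `erfc`. Completing the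
square gives `μ z + μ² t / 2 = w² - z² / (2t)`, so the Robin correction term is
`e^{-z²/(2t)}` times the scaled complementary error function `e^{w²} erfc w`. The Gaussian tail
bound `erfc w ≤ 2 e^{-w²}` (for `w ≥ 0`) and `erfc ≤ 2` show `e^{w²} erfc w ≤ 2 e^{M²}` whenever
`w ≥ -M`, and `w ≥ -|μ|` because `t ≤ 1`. Finally `e^{-z²/(2t)} = √(2πt) ϱ(t,-x,y)` and
`ϱ(t,-x,y) ≤ ϱ(t,x,y)` for `x, y ≥ 0`, which also bounds the reflected Gaussian term of `ρ_μ`.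
-/

lemma integral_exp_neg_sq : ∫ s : ℝ, exp (-s ^ 2) = √π := by
  simpa using integral_gaussian 1

lemma integrable_exp_neg_sq : Integrable fun s : ℝ => exp (-s ^ 2) := by
  simpa using integrable_exp_neg_mul_sq one_pos

lemma erfc_nonneg (x : ℝ) : 0 ≤ erfc x :=
  mul_nonneg (by positivity) (setIntegral_nonneg measurableSet_Ioi fun _ _ => (exp_pos _).le)

lemma erfc_le_two (x : ℝ) : erfc x ≤ 2 := by
  have htail : ∫ s in Set.Ioi x, exp (-s ^ 2) ≤ √π := integral_exp_neg_sq ▸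
    setIntegral_le_integral integrable_exp_neg_sq (.of_forall fun _ => (exp_pos _).le)
  calc erfc x ≤ 2 / √π * √π := mul_le_mul_of_nonneg_left htail (by positivity)
    _ = 2 := by field_simp

lemma erfc_le_two_mul_exp_neg_sq {u : ℝ} (hu : 0 ≤ u) : erfc u ≤ 2 * exp (-u ^ 2) := by
  have hshift : Integrable fun s : ℝ => exp (-u ^ 2) * exp (-(s - u) ^ 2) :=
    (integrable_exp_neg_sq.comp_sub_right u).const_mul _
  -- `s² ≥ u² + (s - u)²` for `s ≥ u ≥ 0`
  have htail : ∫ s in Set.Ioi u, exp (-s ^ 2) ≤ exp (-u ^ 2) * √π :=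
    calc ∫ s in Set.Ioi u, exp (-s ^ 2)
        ≤ ∫ s in Set.Ioi u, exp (-u ^ 2) * exp (-(s - u) ^ 2) := by
          refine setIntegral_mono_on integrable_exp_neg_sq.integrableOn hshift.integrableOn
            measurableSet_Ioi fun s hs => ?_
          rw [← exp_add, exp_le_exp]
          nlinarith [Set.mem_Ioi.mp hs]
      _ ≤ ∫ s, exp (-u ^ 2) * exp (-(s - u) ^ 2) :=
          setIntegral_le_integral hshift (.of_forall fun _ => by positivity)
      _ = exp (-u ^ 2) * √π := by
          rw [integral_const_mul, integral_sub_right_eq_self (fun s => exp (-s ^ 2)),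
            integral_exp_neg_sq]
  calc erfc u ≤ 2 / √π * (exp (-u ^ 2) * √π) := mul_le_mul_of_nonneg_left htail (by positivity)
    _ = 2 * exp (-u ^ 2) := by field_simp

lemma exp_sq_mul_erfc_le {M w : ℝ} (hw : -M ≤ w) : exp (w ^ 2) * erfc w ≤ 2 * exp (M ^ 2) := by
  rcases le_or_gt 0 w with hw0 | hw0
  · calc exp (w ^ 2) * erfc w ≤ exp (w ^ 2) * (2 * exp (-w ^ 2)) :=
          mul_le_mul_of_nonneg_left (erfc_le_two_mul_exp_neg_sq hw0) (exp_pos _).le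
      _ = 2 := by rw [mul_left_comm, ← exp_add, add_neg_cancel, exp_zero, mul_one]
      _ ≤ 2 * exp (M ^ 2) := le_mul_of_one_le_right zero_le_two (one_le_exp (sq_nonneg M))
  · calc exp (w ^ 2) * erfc w ≤ exp (M ^ 2) * 2 :=
          mul_le_mul (exp_le_exp.mpr (by nlinarith)) (erfc_le_two w) (erfc_nonneg w)
            (exp_pos _).le
      _ = 2 * exp (M ^ 2) := mul_comm _ _

lemma sq_div_sqrt_two_mul_add_mul_sqrt_div_two (μ z : ℝ) {t : ℝ} (ht : 0 < t) :
    (z / √(2 * t) + μ * √(t / 2)) ^ 2 = z ^ 2 / (2 * t) + (μ * z + μ ^ 2 * t / 2) := by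
  have hr : 0 < √(2 * t) := by positivity
  have hr2 : √(2 * t) ^ 2 = 2 * t := sq_sqrt (by positivity)
  have hhalf : √(t / 2) = √(2 * t) / 2 := by
    rw [show t / 2 = 2 * t / 2 ^ 2 by ring, sqrt_div' _ (by positivity), sqrt_sq zero_le_two]
  rw [hhalf]
  field_simp
  rw [hr2]
  ring

lemma exp_mul_erfc_le {μ t z : ℝ} (ht : 0 < t) (ht1 : t ≤ 1) (hz : 0 ≤ z) :
    exp (μ * z + μ ^ 2 * t / 2) * erfc (z / √(2 * t) + μ * √(t / 2))
      ≤ 2 * exp (μ ^ 2) * exp (-z ^ 2 / (2 * t)) := by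
  set w := z / √(2 * t) + μ * √(t / 2)
  have hexp : μ * z + μ ^ 2 * t / 2 = -z ^ 2 / (2 * t) + w ^ 2 := by
    rw [sq_div_sqrt_two_mul_add_mul_sqrt_div_two μ z ht]; ring
  have hw : -|μ| ≤ w := by
    have hsqrt : √(t / 2) ≤ 1 := sqrt_le_one.mpr (by linarith)
    have hdrift : |μ * √(t / 2)| ≤ |μ| := by
      rw [abs_mul, abs_of_nonneg (sqrt_nonneg _)]
      exact mul_le_of_le_one_right (abs_nonneg μ) hsqrt
    have : 0 ≤ z / √(2 * t) := by positivity
    linarith [neg_abs_le (μ * √(t / 2))]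
  calc exp (μ * z + μ ^ 2 * t / 2) * erfc w
      = exp (-z ^ 2 / (2 * t)) * (exp (w ^ 2) * erfc w) := by rw [hexp, exp_add, mul_assoc]
    _ ≤ exp (-z ^ 2 / (2 * t)) * (2 * exp (|μ| ^ 2)) :=
        mul_le_mul_of_nonneg_left (exp_sq_mul_erfc_le hw) (exp_pos _).le
    _ = 2 * exp (μ ^ 2) * exp (-z ^ 2 / (2 * t)) := by rw [sq_abs]; ring

lemma exp_neg_sq_div_eq_sqrt_mul_heatKernel {t : ℝ} (ht : 0 < t) (x y : ℝ) :
    exp (-(y - x) ^ 2 / (2 * t)) = √(2 * π * t) * heatKernel t x y := by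
  have : 0 < √(2 * π * t) := by positivity
  rw [heatKernel]
  field_simp

lemma heatKernel_neg_le {t x y : ℝ} (ht : 0 < t) (hx : 0 ≤ x) (hy : 0 ≤ y) :
    heatKernel t (-x) y ≤ heatKernel t x y := by
  unfold heatKernel
  refine mul_le_mul_of_nonneg_left (exp_le_exp.mpr ?_) (by positivity)
  exact div_le_div_of_nonneg_right (by nlinarith) (by positivity)

lemma robinKernel_eq (μ t x y : ℝ) :
    robinKernel μ t x y = heatKernel t x y + heatKernel t (-x) y -
      μ * (exp (μ * (y + x) + μ ^ 2 * t / 2) *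
        erfc ((y + x) / √(2 * t) + μ * √(t / 2))) := by
  simp only [robinKernel, heatKernel, sub_neg_eq_add]
  ring

/-- For every `μ ∈ ℝ` there is a constant `C(μ) > 0`, depending only on `μ`, such that
for all `(t,x,y) ∈ (0,1] × ℝ_{≥0} × ℝ_{≥0}` one has `ρ_μ(t,x,y) ≤ C(μ) ϱ(t,x,y)`. -/
theorem robinKernel_le_const_mul_heatKernel (μ : ℝ) :
    ∃ C : ℝ, 0 < C ∧ ∀ t x y : ℝ, t ∈ Set.Ioc (0 : ℝ) 1 → 0 ≤ x → 0 ≤ y →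
      robinKernel μ t x y ≤ C * heatKernel t x y := by
  refine ⟨2 + |μ| * (2 * exp (μ ^ 2) * √(2 * π)), by positivity, ?_⟩
  rintro t x y ⟨ht, ht1⟩ hx hy
  set E := exp (μ * (y + x) + μ ^ 2 * t / 2) * erfc ((y + x) / √(2 * t) + μ * √(t / 2))
  have hE : E ≤ 2 * exp (μ ^ 2) * √(2 * π) * heatKernel t x y :=
    calc E ≤ 2 * exp (μ ^ 2) * exp (-(y - -x) ^ 2 / (2 * t)) := by
          simpa only [sub_neg_eq_add] using exp_mul_erfc_le (μ := μ) ht ht1 (add_nonneg hy hx)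
      _ = 2 * exp (μ ^ 2) * (√(2 * π * t) * heatKernel t (-x) y) := by
          rw [exp_neg_sq_div_eq_sqrt_mul_heatKernel ht]
      _ ≤ 2 * exp (μ ^ 2) * (√(2 * π) * heatKernel t x y) := by
          have hsqrt : √(2 * π * t) ≤ √(2 * π) := sqrt_le_sqrt (by nlinarith [pi_pos])
          have : 0 ≤ heatKernel t (-x) y := by unfold heatKernel; positivity
          gcongr
          exact heatKernel_neg_le ht hx hy
      _ = _ := by ring
  have hcorr : -μ * E ≤ |μ| * (2 * exp (μ ^ 2) * √(2 * π) * heatKernel t x y) :=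
    mul_le_mul (neg_le_abs μ) hE (mul_nonneg (exp_pos _).le (erfc_nonneg _)) (abs_nonneg μ)
  rw [robinKernel_eq]
  linarith [heatKernel_neg_le ht hx hy]
end

section
/- For all t > 0, a ≥ 0 and μ ∈ ℝ one has the identity (1/√(2πt³)) · ∫_0^∞ e^{−μs} (a+s) e^{−(a+s)²/(2t)} ds = (1/√(2πt)) · e^{−a²/(2t)} − (μ/2) · e^{μa + μ²t/2} · erfc(a/√(2t) + μ·√(t/2)). -/
open MeasureTheory Real

/-!
Completing the square, `e^{-μs} e^{-(a+s)²/(2t)} = e^{μa + μ²t/2} e^{-(s+c)²/(2t)}` with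
`c = a + μt`, and writing `a + s = (s + c) - μt`, splits the integrand into
`(s + c) e^{-(s+c)²/(2t)}`, which has the elementary antiderivative `-t e^{-(s+c)²/(2t)}`,
and a multiple of the Gaussian `e^{-(s+c)²/(2t)}`, whose integral over `s > 0` is a Gaussian
tail, i.e. an `erfc` value.
-/

open Set Filter Topology

theorem integral_comp_add_right_Ioi {E : Type*} [NormedAddCommGroup E] [NormedSpace ℝ E]
    (g : ℝ → E) (a c : ℝ) :
    ∫ x in Ioi a, g (x + c) = ∫ x in Ioi (a + c), g x := by
  rw [← (measurePreserving_add_right volume c).setIntegral_preimage_emb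
    (MeasurableEquiv.addRight c).measurableEmbedding g (Ioi (a + c)),
    preimage_add_const_Ioi, add_sub_cancel_right]

theorem integral_Ioi_mul_exp_neg_mul_sq {b : ℝ} (hb : 0 < b) (c : ℝ) :
    ∫ x in Ioi c, x * exp (-b * x ^ 2) = exp (-b * c ^ 2) / (2 * b) := by
  have hderiv : ∀ x : ℝ,
      HasDerivAt (fun x => -exp (-b * x ^ 2) / (2 * b)) (x * exp (-b * x ^ 2)) x := by
    intro x
    refine ((((hasDerivAt_pow 2 x).const_mul (-b)).exp).neg.div_const (2 * b)).congr_deriv ?_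
    field_simp
    push_cast
    ring
  have hlim : Tendsto (fun x : ℝ => -exp (-b * x ^ 2) / (2 * b)) atTop (𝓝 0) := by
    have h := tendsto_exp_atBot.comp
      ((tendsto_pow_atTop two_ne_zero).const_mul_atTop_of_neg (neg_lt_zero.2 hb))
    simpa using (h.neg).div_const (2 * b)
  rw [integral_Ioi_of_hasDerivAt_of_tendsto' (fun x _ => hderiv x)
    (integrable_mul_exp_neg_mul_sq hb).integrableOn hlim]
  ring

theorem integral_Ioi_exp_neg_mul_sq {b : ℝ} (hb : 0 < b) (c : ℝ) :
    ∫ x in Ioi c, exp (-b * x ^ 2) = √π / (2 * √b) * erfc (√b * c) := by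
  have hscale : ∀ x : ℝ, exp (-b * x ^ 2) = exp (-(√b * x) ^ 2) := by
    intro x
    rw [mul_pow, sq_sqrt hb.le, neg_mul]
  simp_rw [hscale]
  rw [integral_comp_mul_left_Ioi (fun u => exp (-u ^ 2)) c (sqrt_pos.2 hb), erfc, smul_eq_mul]
  field_simp

theorem integral_Ioi_sub_mul_exp_neg_mul_sq {b : ℝ} (hb : 0 < b) (c m : ℝ) :
    ∫ x in Ioi c, (x - m) * exp (-b * x ^ 2) =
      exp (-b * c ^ 2) / (2 * b) - m * (√π / (2 * √b) * erfc (√b * c)) := by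
  simp_rw [sub_mul]
  rw [integral_sub (integrable_mul_exp_neg_mul_sq hb).integrableOn
    ((integrable_exp_neg_mul_sq hb).const_mul m).integrableOn, integral_const_mul,
    integral_Ioi_mul_exp_neg_mul_sq hb, integral_Ioi_exp_neg_mul_sq hb]

theorem exp_neg_mul_mul_exp_neg_sq_div {t : ℝ} (ht : t ≠ 0) (a μ s : ℝ) :
    exp (-μ * s) * exp (-(a + s) ^ 2 / (2 * t)) =
      exp (μ * a + μ ^ 2 * t / 2) * exp (-(2 * t)⁻¹ * (s + (a + μ * t)) ^ 2) := by
  rw [← exp_add, ← exp_add]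
  congr 1
  field_simp
  ring

theorem integral_exp_shifted_gaussian_general (t a μ : ℝ) (ht : 0 < t) :
    (1 / Real.sqrt (2 * π * t ^ 3)) *
        ∫ s in Set.Ioi (0 : ℝ),
          Real.exp (-μ * s) * (a + s) * Real.exp (-(a + s) ^ 2 / (2 * t)) =
      (1 / Real.sqrt (2 * π * t)) * Real.exp (-a ^ 2 / (2 * t)) -
        (μ / 2) * Real.exp (μ * a + μ ^ 2 * t / 2) *
          erfc (a / Real.sqrt (2 * t) + μ * Real.sqrt (t / 2)) := by
  set b : ℝ := (2 * t)⁻¹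
  set c : ℝ := a + μ * t
  set K : ℝ := exp (μ * a + μ ^ 2 * t / 2)
  have hb : 0 < b := by positivity
  have hsplit : ∀ s : ℝ, exp (-μ * s) * (a + s) * exp (-(a + s) ^ 2 / (2 * t)) =
      K * ((s + c - μ * t) * exp (-b * (s + c) ^ 2)) := by
    intro s
    linear_combination (a + s) * exp_neg_mul_mul_exp_neg_sq_div ht.ne' a μ s
  have hgauss : K * exp (-b * c ^ 2) = exp (-a ^ 2 / (2 * t)) := by
    simpa only [mul_zero, neg_zero, exp_zero, one_mul, add_zero, zero_add] using
      (exp_neg_mul_mul_exp_neg_sq_div ht.ne' a μ 0).symm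
  rw [setIntegral_congr_fun measurableSet_Ioi (fun s _ => hsplit s), integral_const_mul,
    integral_comp_add_right_Ioi (fun x => (x - μ * t) * exp (-b * x ^ 2)), zero_add,
    integral_Ioi_sub_mul_exp_neg_mul_sq hb]
  have hr : 0 < √(2 * t) := by positivity
  have hsqrt_b : √b = (√(2 * t))⁻¹ := sqrt_inv _
  have hsqrt_half : √(t / 2) = t / √(2 * t) := by
    rw [eq_div_iff hr.ne', ← sqrt_mul (by positivity), show t / 2 * (2 * t) = t ^ 2 by ring,
      sqrt_sq ht.le]
  have hsqrt_2πt : √(2 * π * t) = √π * √(2 * t) := by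
    rw [← sqrt_mul pi_pos.le]; ring_nf
  have hsqrt_2πt3 : √(2 * π * t ^ 3) = t * √(2 * π * t) := by
    rw [show 2 * π * t ^ 3 = t ^ 2 * (2 * π * t) by ring, sqrt_mul (by positivity), sqrt_sq ht.le]
  have harg : √b * c = a / √(2 * t) + μ * √(t / 2) := by
    rw [hsqrt_b, hsqrt_half]; ring
  rw [harg, hsqrt_2πt3, mul_sub, ← mul_div_assoc, hgauss, hsqrt_b, hsqrt_2πt]
  simp only [b]
  field_simp

/-- For all `t > 0`, `a ≥ 0`, `μ ∈ ℝ`: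
`(1/√(2πt³)) ∫_0^∞ e^{-μs}(a+s) e^{-(a+s)²/(2t)} ds
  = (1/√(2πt)) e^{-a²/(2t)} - (μ/2) e^{μa + μ²t/2} erfc(a/√(2t) + μ√(t/2))`. -/
theorem integral_exp_shifted_gaussian (t a μ : ℝ) (ht : 0 < t) (ha : 0 ≤ a) :
    (1 / Real.sqrt (2 * π * t ^ 3)) *
        ∫ s in Set.Ioi (0 : ℝ),
          Real.exp (-μ * s) * (a + s) * Real.exp (-(a + s) ^ 2 / (2 * t)) =
      (1 / Real.sqrt (2 * π * t)) * Real.exp (-a ^ 2 / (2 * t)) -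
        (μ / 2) * Real.exp (μ * a + μ ^ 2 * t / 2) *
          erfc (a / Real.sqrt (2 * t) + μ * Real.sqrt (t / 2)) :=
  integral_exp_shifted_gaussian_general t a μ ht
end

section
/- Let (S_i)_{i≥0} be a simple symmetric random walk on ℤ started at 0 and let N_n = #{1 ≤ i ≤ n : S_i = 0} be the number of returns to 0 up to time n. Then for all integers n, k ≥ 1 and every λ > 0, P(N_n ≥ k) ≤ e^{λn} · (1 − √(1 − e^{−2λ}))^k. -/
/-!
Let `t = e^λ` and `f = 1 - √(1 - t⁻²)`, the Laplace transform `E[e^{-λT}]` of the first return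
time `T` to `0`; then `ρ = f t = t - √(t² - 1)`, the transform of the hitting time of a neighbour,
is the small root of `ρ² + 1 = 2tρ`. The event `N_n ≥ k` says that the `k`-th return happens by
time `n`, so Chernoff's bound gives `P(N_n ≥ k) ≤ e^{λn} f^k`. To avoid stopping times we use
instead the potential `V x j`, the transform of the time of `j` more returns seen from `x`
(`ρ^{|x|} f^{j-1}`, or `f^j` at `0`). The quadratic relation says that `V` is superharmonic with
factor `t` for the walk, so by induction on `n` at most `(2t)^n f^k` of the `2^n` sign patterns
produce `k` returns.
-/

open MeasureTheory ProbabilityTheory Real Finset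

namespace SimpleRandomWalk

def returnCount (x : ℤ) (g : ℕ → ℤ) (m : ℕ) : ℕ :=
  #{i ∈ Icc 1 m | x + ∑ j ∈ range i, g j = 0}

lemma returnCount_zero (x : ℤ) (g : ℕ → ℤ) : returnCount x g 0 = 0 := by
  simp [returnCount]

lemma returnCount_succ (x : ℤ) (g : ℕ → ℤ) (m : ℕ) :
    returnCount x g (m + 1) =
      returnCount (x + g 0) (fun j => g (j + 1)) m + if x + g 0 = 0 then 1 else 0 := by
  have hIcc : Icc 1 (m + 1) = insert 1 ((Icc 1 m).map (addRightEmbedding 1)) := by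
    rw [map_add_right_Icc]
    ext i
    simp only [mem_Icc, mem_insert]
    omega
  have hshift : ∀ i, x + ∑ j ∈ range (i + 1), g j = x + g 0 + ∑ j ∈ range i, g (j + 1) := by
    intro i
    rw [sum_range_succ']
    ring
  rw [returnCount, returnCount, hIcc, filter_insert, filter_map]
  simp only [Function.comp_def, addRightEmbedding_apply, hshift, range_one,
    sum_singleton]
  split_ifs with h
  · rw [card_insert_of_notMem (by simp), card_map]
  · rw [card_map, add_zero]

lemma returnCount_congr {x : ℤ} {g g' : ℕ → ℤ} {m : ℕ} (h : ∀ j < m, g j = g' j) :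
    returnCount x g m = returnCount x g' m := by
  unfold returnCount
  congr 1
  refine filter_congr fun i hi => ?_
  rw [sum_congr rfl fun j hj => h j (by simp at hi hj; omega)]

def signOf (b : Bool) : ℤ := if b then 1 else -1

def stepSeq {m : ℕ} (ε : Fin m → Bool) (j : ℕ) : ℤ :=
  if h : j < m then signOf (ε ⟨j, h⟩) else 0

lemma stepSeq_cons_zero {m : ℕ} (a : Bool) (ε : Fin m → Bool) :
    stepSeq (Fin.cons a ε : Fin (m + 1) → Bool) 0 = signOf a := by
  simp [stepSeq]

lemma stepSeq_cons_succ {m : ℕ} (a : Bool) (ε : Fin m → Bool) (j : ℕ) :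
    stepSeq (Fin.cons a ε : Fin (m + 1) → Bool) (j + 1) = stepSeq ε j := by
  by_cases h : j < m
  · rw [stepSeq, stepSeq, dif_pos (by omega), dif_pos h]
    rfl
  · rw [stepSeq, stepSeq, dif_neg (by omega), dif_neg h]

lemma returnCount_cons (x : ℤ) {m : ℕ} (a : Bool) (ε : Fin m → Bool) :
    returnCount x (stepSeq (Fin.cons a ε : Fin (m + 1) → Bool)) (m + 1) =
      returnCount (x + signOf a) (stepSeq ε) m + if x + signOf a = 0 then 1 else 0 := by
  simp only [returnCount_succ, stepSeq_cons_zero, stepSeq_cons_succ]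

lemma card_filter_pi_fin_succ {α : Type*} [Fintype α] [DecidableEq α] {m : ℕ}
    (p : (Fin (m + 1) → α) → Prop) [DecidablePred p] :
    #{ε | p ε} = ∑ a : α, #{ε : Fin m → α | p (Fin.cons a ε)} := by
  simp only [card_filter]
  rw [← (Fin.consEquiv fun _ => α).sum_comp, Fintype.sum_prod_type]
  rfl

/-- Stepping to `y` turns the requirement of `j` further returns into `j - [y = 0]` (truncated:
once met, it stays met). -/
theorem card_returnCount_le {V : ℤ → ℕ → ℝ} {c : ℝ} (hc : 0 ≤ c)
    (hV_nonneg : ∀ x j, 0 ≤ V x j) (hV_zero : ∀ x, 1 ≤ V x 0)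
    (hV_step : ∀ x j, V (x + 1) (j - if x + 1 = 0 then 1 else 0) +
      V (x - 1) (j - if x - 1 = 0 then 1 else 0) ≤ c * V x j)
    (m : ℕ) (x : ℤ) (j : ℕ) :
    (#{ε : Fin m → Bool | j ≤ returnCount x (stepSeq ε) m} : ℝ) ≤ c ^ m * V x j := by
  induction m generalizing x j with
  | zero =>
    rcases Nat.eq_zero_or_pos j with rfl | hj
    · simpa using hV_zero x
    · simpa [returnCount_zero, hj.ne'] using hV_nonneg x j
  | succ m ih =>
    have hcons : ∀ a : Bool,
        (#{ε : Fin m → Bool |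
            j ≤ returnCount x (stepSeq (Fin.cons a ε : Fin (m + 1) → Bool)) (m + 1)} : ℝ) ≤
          c ^ m * V (x + signOf a) (j - if x + signOf a = 0 then 1 else 0) := by
      intro a
      simp_rw [returnCount_cons, ← Nat.sub_le_iff_le_add]
      exact ih _ _
    calc (#{ε : Fin (m + 1) → Bool | j ≤ returnCount x (stepSeq ε) (m + 1)} : ℝ)
        ≤ c ^ m * V (x + 1) (j - if x + 1 = 0 then 1 else 0) +
            c ^ m * V (x - 1) (j - if x - 1 = 0 then 1 else 0) := by
          rw [card_filter_pi_fin_succ, Nat.cast_sum, Fintype.sum_bool]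
          simpa [signOf, ← sub_eq_add_neg] using add_le_add (hcons true) (hcons false)
      _ ≤ c ^ m * (c * V x j) := by
          rw [← mul_add]
          exact mul_le_mul_of_nonneg_left (hV_step x j) (by positivity)
      _ = c ^ (m + 1) * V x j := by ring

def returnPotential (f ρ : ℝ) : ℤ → ℕ → ℝ
  | _, 0 => 1
  | x, j + 1 => (if x = 0 then f else ρ ^ x.natAbs) * f ^ j

section Potential

variable {f ρ t : ℝ}

lemma returnPotential_nonneg (hf : 0 ≤ f) (hρ : 0 ≤ ρ) (x : ℤ) (j : ℕ) :
    0 ≤ returnPotential f ρ x j := by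
  cases j with
  | zero => simp [returnPotential]
  | succ j => dsimp only [returnPotential]; split_ifs <;> positivity

lemma returnPotential_zero_left (j : ℕ) : returnPotential f ρ 0 j = f ^ j := by
  cases j with
  | zero => simp [returnPotential]
  | succ j => simp [returnPotential, pow_succ']

lemma returnPotential_succ_sub (y : ℤ) (j : ℕ) :
    returnPotential f ρ y (j + 1 - if y = 0 then 1 else 0) = ρ ^ y.natAbs * f ^ j := by
  by_cases hy : y = 0
  · simp [hy, returnPotential_zero_left]
  · simp [hy, returnPotential]

lemma pow_natAbs_add_one_add_pow_natAbs_sub_one (hρ : ρ = f * t) (hquad : ρ ^ 2 + 1 = 2 * t * ρ)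
    (x : ℤ) :
    ρ ^ (x + 1).natAbs + ρ ^ (x - 1).natAbs = 2 * t * if x = 0 then f else ρ ^ x.natAbs := by
  by_cases hx : x = 0
  · simp only [hx, zero_add, zero_sub, Int.natAbs_one, Int.natAbs_neg, pow_one, if_true, hρ]
    ring
  · obtain ⟨a, ha⟩ : ∃ a : ℕ, x.natAbs = a + 1 := Nat.exists_eq_succ_of_ne_zero (by omega)
    have hsum : ρ ^ a + ρ ^ (a + 2) = 2 * t * ρ ^ (a + 1) := by
      linear_combination ρ ^ a * hquad
    rw [if_neg hx, ha]
    rcases lt_or_gt_of_ne hx with hneg | hpos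
    · rwa [show (x + 1).natAbs = a by omega, show (x - 1).natAbs = a + 2 by omega]
    · rwa [show (x + 1).natAbs = a + 2 by omega, show (x - 1).natAbs = a by omega, add_comm]

lemma returnPotential_step (ht : 1 ≤ t) (hρ : ρ = f * t) (hquad : ρ ^ 2 + 1 = 2 * t * ρ)
    (x : ℤ) (j : ℕ) :
    returnPotential f ρ (x + 1) (j - if x + 1 = 0 then 1 else 0) +
      returnPotential f ρ (x - 1) (j - if x - 1 = 0 then 1 else 0) ≤
        2 * t * returnPotential f ρ x j := by
  cases j with
  | zero =>
    simp only [returnPotential, Nat.zero_sub]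
    linarith
  | succ j =>
    rw [returnPotential_succ_sub, returnPotential_succ_sub, ← add_mul,
      pow_natAbs_add_one_add_pow_natAbs_sub_one hρ hquad, returnPotential, mul_assoc]

end Potential

noncomputable def rademacher : Measure ℤ :=
  (2 : ENNReal)⁻¹ • Measure.dirac (-1 : ℤ) + (2 : ENNReal)⁻¹ • Measure.dirac (1 : ℤ)

section Probability

variable {Ω : Type*} [MeasurableSpace Ω] {P : Measure Ω} {ξ : ℕ → Ω → ℤ}

lemma ae_eq_one_or_eq_neg_one (hmeas : ∀ j, Measurable (ξ j))
    (hdist : ∀ j, P.map (ξ j) = rademacher) :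
    ∀ᵐ ω ∂P, ∀ j, ξ j ω = 1 ∨ ξ j ω = -1 := by
  refine ae_all_iff.2 fun j => ae_iff.2 ?_
  have hset : {ω | ¬(ξ j ω = 1 ∨ ξ j ω = -1)} = ξ j ⁻¹' ({1, -1} : Set ℤ)ᶜ := by
    ext ω; simp
  rw [hset, ← Measure.map_apply (hmeas j) (by measurability), hdist j]
  simp [rademacher]

lemma measure_preimage_signOf (hmeas : ∀ j, Measurable (ξ j))
    (hdist : ∀ j, P.map (ξ j) = rademacher)
    (j : ℕ) (b : Bool) : P (ξ j ⁻¹' {signOf b}) = 2⁻¹ := by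
  rw [← Measure.map_apply (hmeas j) (measurableSet_singleton _), hdist j]
  cases b <;> simp [rademacher, signOf]

lemma measure_cylinder (hmeas : ∀ j, Measurable (ξ j)) (hindep : iIndepFun ξ P)
    (hdist : ∀ j, P.map (ξ j) = rademacher)
    {n : ℕ} (ε : Fin n → Bool) :
    P {ω | ∀ j < n, ξ j ω = stepSeq ε j} = 2⁻¹ ^ n := by
  have hcyl : {ω | ∀ j < n, ξ j ω = stepSeq ε j} = ⋂ j ∈ range n, ξ j ⁻¹' {stepSeq ε j} := by
    ext ω; simp
  rw [hcyl, hindep.measure_inter_preimage_eq_mul _ fun _ _ => measurableSet_singleton _]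
  trans ∏ _j ∈ range n, 2⁻¹
  · refine prod_congr rfl fun j hj => ?_
    rw [stepSeq, dif_pos (mem_range.1 hj), measure_preimage_signOf hmeas hdist]
  · rw [prod_const, card_range]

lemma measure_le_card_mul (hmeas : ∀ j, Measurable (ξ j)) (hindep : iIndepFun ξ P)
    (hdist : ∀ j, P.map (ξ j) = rademacher)
    {n : ℕ} (Q : (ℕ → ℤ) → Prop) [DecidablePred Q]
    (hQ : ∀ g g' : ℕ → ℤ, (∀ j < n, g j = g' j) → Q g → Q g') :
    P {ω | Q (fun j => ξ j ω)} ≤ #{ε : Fin n → Bool | Q (stepSeq ε)} * 2⁻¹ ^ n := by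
  calc P {ω | Q (fun j => ξ j ω)}
      ≤ P (⋃ ε ∈ ({ε | Q (stepSeq ε)} : Finset (Fin n → Bool)),
          {ω | ∀ j < n, ξ j ω = stepSeq ε j}) := by
        refine measure_mono_ae ?_
        filter_upwards [ae_eq_one_or_eq_neg_one hmeas hdist] with ω hsign hQω
        have hcyl : ∀ j < n, ξ j ω = stepSeq (fun i : Fin n => decide (ξ i ω = 1)) j := by
          intro j hj
          rcases hsign j with h | h <;> simp [stepSeq, signOf, hj, h]
        exact Set.mem_iUnion₂.2 ⟨_, mem_filter.2 ⟨mem_univ _, hQ _ _ hcyl hQω⟩, hcyl⟩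
    _ ≤ ∑ ε ∈ ({ε | Q (stepSeq ε)} : Finset (Fin n → Bool)),
          P {ω | ∀ j < n, ξ j ω = stepSeq ε j} := measure_biUnion_finset_le _ _
    _ = #{ε : Fin n → Bool | Q (stepSeq ε)} * 2⁻¹ ^ n := by
        simp [measure_cylinder hmeas hindep hdist]

end Probability

lemma one_sub_sqrt_mul_sq_add_one {t u : ℝ} (hu : u ≤ 1) (htu : t ^ 2 * u = 1) :
    ((1 - √(1 - u)) * t) ^ 2 + 1 = 2 * t * ((1 - √(1 - u)) * t) := by
  linear_combination t ^ 2 * sq_sqrt (sub_nonneg.2 hu) - htu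

theorem measure_returnCount_le {Ω : Type*} [MeasurableSpace Ω] {P : Measure Ω} {ξ : ℕ → Ω → ℤ}
    (hmeas : ∀ j, Measurable (ξ j)) (hindep : iIndepFun ξ P)
    (hdist : ∀ j, P.map (ξ j) = rademacher)
    {t f : ℝ} (ht : 1 ≤ t) (hf : 0 ≤ f) (hquad : (f * t) ^ 2 + 1 = 2 * t * (f * t)) (n k : ℕ) :
    (P {ω | k ≤ returnCount 0 (fun j => ξ j ω) n}).toReal ≤ t ^ n * f ^ k := by
  have hcount := card_returnCount_le (by linarith) (returnPotential_nonneg hf (by positivity))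
    (fun _ => le_rfl) (returnPotential_step ht rfl hquad) n 0 k
  rw [returnPotential_zero_left] at hcount
  have hP := measure_le_card_mul hmeas hindep hdist (fun g => k ≤ returnCount 0 g n)
    fun g g' hgg' hg => (returnCount_congr hgg').symm ▸ hg
  calc (P {ω | k ≤ returnCount 0 (fun j => ξ j ω) n}).toReal
      ≤ #{ε : Fin n → Bool | k ≤ returnCount 0 (stepSeq ε) n} * 2⁻¹ ^ n := by
        simpa using ENNReal.toReal_mono (by finiteness) hP
    _ ≤ (2 * t) ^ n * f ^ k * 2⁻¹ ^ n := by gcongr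
    _ = t ^ n * f ^ k := by rw [mul_pow, inv_pow]; field_simp

end SimpleRandomWalk

open SimpleRandomWalk in
theorem returns_tail_bound_general {Ω : Type*} [MeasurableSpace Ω] (P : Measure Ω)
    (ξ : ℕ → Ω → ℤ) (hmeas : ∀ j, Measurable (ξ j))
    (hindep : iIndepFun ξ P)
    (hdist : ∀ j, P.map (ξ j) =
      (2 : ENNReal)⁻¹ • Measure.dirac (-1 : ℤ) + (2 : ENNReal)⁻¹ • Measure.dirac (1 : ℤ))
    (S : ℕ → Ω → ℤ) (hS : ∀ i ω, S i ω = ∑ j ∈ Finset.range i, ξ j ω)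
    (N : ℕ → Ω → ℕ)
    (hN : ∀ n ω, N n ω = ((Finset.Icc 1 n).filter (fun i => S i ω = 0)).card)
    (n k : ℕ) (lam : ℝ) (hlam : 0 < lam) :
    (P {ω | k ≤ N n ω}).toReal ≤
      Real.exp (lam * n) * (1 - Real.sqrt (1 - Real.exp (-2 * lam))) ^ k := by
  have hevent : {ω | k ≤ N n ω} = {ω | k ≤ returnCount 0 (fun j => ξ j ω) n} := by
    ext ω
    simp [hN, hS, returnCount]
  have hu : exp (-2 * lam) ≤ 1 := exp_le_one_iff.2 (by linarith)
  have htu : exp lam ^ 2 * exp (-2 * lam) = 1 := by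
    rw [← exp_nat_mul, ← exp_add]
    norm_num
  rw [hevent, mul_comm lam, exp_nat_mul]
  exact measure_returnCount_le hmeas hindep hdist (one_le_exp hlam.le)
    (sub_nonneg.2 (sqrt_le_one.2 (by linarith [exp_pos (-2 * lam)])))
    (one_sub_sqrt_mul_sq_add_one hu htu) n k

/-- Tail bound for the number of returns to `0` of a simple symmetric random walk:
for all `n, k ≥ 1` and `λ > 0`, `P(N_n ≥ k) ≤ e^{λn}(1 - √(1 - e^{-2λ}))^k`, where
`N_n = #{1 ≤ i ≤ n : S_i = 0}`. -/
theorem returns_tail_bound {Ω : Type*} [MeasurableSpace Ω] (P : Measure Ω)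
    [IsProbabilityMeasure P] (ξ : ℕ → Ω → ℤ) (hmeas : ∀ j, Measurable (ξ j))
    (hindep : iIndepFun ξ P)
    (hdist : ∀ j, P.map (ξ j) =
      (2 : ENNReal)⁻¹ • Measure.dirac (-1 : ℤ) + (2 : ENNReal)⁻¹ • Measure.dirac (1 : ℤ))
    (S : ℕ → Ω → ℤ) (hS : ∀ i ω, S i ω = ∑ j ∈ Finset.range i, ξ j ω)
    (N : ℕ → Ω → ℕ)
    (hN : ∀ n ω, N n ω = ((Finset.Icc 1 n).filter (fun i => S i ω = 0)).card)
    (n k : ℕ) (hn : 1 ≤ n) (hk : 1 ≤ k) (lam : ℝ) (hlam : 0 < lam) :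
    (P {ω | k ≤ N n ω}).toReal ≤
      Real.exp (lam * n) * (1 - Real.sqrt (1 - Real.exp (-2 * lam))) ^ k :=
  returns_tail_bound_general P ξ hmeas hindep hdist S hS N hN n k lam hlam
end
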